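/- Let L_k(V) be a Schurian-generated free k-category (each generating space {}_yV_x is at most one-dimensional) and let a finite group G act homogeneously on it, trivially on objects. Then the invariant subcategory L_k(V)^G is again a free k-category, free on the family of vector spaces spanned by the irreducible invariant paths. -/

import Mathlib

/-!
STATEMENT 9: Let `L_k(V)` be a Schurian-generated free `k`-category (its bases-quiver
`V` has no multiple arrows), with a homogeneous action of a finite group `G`, trivial
on objects; the action is recorded by a character `χ a : G →* kˣ` for each arrow `a`.
The invariant subcategory `L_k(V)^G` is again free, on the family spanned by the
irreducible invariant paths.  We formalize this as:
(1) the invariant morphism space from `x` to `y` (fixed points of the `G`-action on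
    the linearized path space `Path x y →₀ k`) is spanned by the invariant paths, and
(2) every invariant path is the composite of a *unique* path of irreducible invariant
    paths (so the invariant category is freely generated by the irreducible invariant
    paths).
-/

open Quiver

section

variable {k G V : Type} [Field k] [Group G] [Quiver.{1} V]

/-- The character of a path: product of the characters of its arrows. -/
def pathChar (χ : ∀ x y : V, (x ⟶ y) → (G →* kˣ)) :
    ∀ {x y : V}, Path x y → G → kˣ
  | _, _, .nil => fun _ => 1
  | _, _, .cons p e => fun g => pathChar χ p g * χ _ _ e g

/-- A path is invariant if its character is trivial. -/
def IsInvPath (χ : ∀ x y : V, (x ⟶ y) → (G →* kˣ)) {x y : V} (w : Path x y) : Prop :=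
  ∀ g : G, pathChar χ w g = 1

/-- An invariant path of positive length is irreducible if it is not the
concatenation of two invariant paths of positive length. -/
def IsIrrInvPath (χ : ∀ x y : V, (x ⟶ y) → (G →* kˣ)) {x y : V} (w : Path x y) : Prop :=
  IsInvPath χ w ∧ 0 < w.length ∧
    ¬ ∃ (z : V) (w₁ : Path x z) (w₂ : Path z y),
        0 < w₁.length ∧ 0 < w₂.length ∧ IsInvPath χ w₁ ∧ IsInvPath χ w₂ ∧ w = w₁.comp w₂

/-- The action of `g : G` on the linearized path space `Path x y →₀ k`:
each basis path `w` is scaled by its character value `χ_w(g)`. -/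
noncomputable def actG (χ : ∀ x y : V, (x ⟶ y) → (G →* kˣ)) (x y : V) (g : G) :
    (Path x y →₀ k) →ₗ[k] (Path x y →₀ k) :=
  Finsupp.lsum k fun w : Path x y =>
    (Finsupp.lsingle w).comp (((pathChar χ w g : kˣ) : k) • LinearMap.id)

/-- The invariant subspace `{}_y[L_k(V)^G]_x`: the fixed points of the action. -/
noncomputable def InvSpace (χ : ∀ x y : V, (x ⟶ y) → (G →* kˣ)) (x y : V) :
    Submodule k (Path x y →₀ k) :=
  ⨅ g : G, LinearMap.eqLocus (actG χ x y g) (LinearMap.id (R := k))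

/-- Paths of composable irreducible invariant paths: the morphisms of the free
category generated by the irreducible invariant paths. -/
inductive IrrPath (χ : ∀ x y : V, (x ⟶ y) → (G →* kˣ)) : V → V → Type 1
  | nil (x : V) : IrrPath χ x x
  | cons {x y z : V} (c : IrrPath χ x y) (w : Path y z) (h : IsIrrInvPath χ w) :
      IrrPath χ x z

/-- The composite of the members of such a path. -/
def IrrPath.compose {χ : ∀ x y : V, (x ⟶ y) → (G →* kˣ)} :
    ∀ {x y : V}, IrrPath χ x y → Path x y
  | _, _, .nil _ => Path.nil
  | _, _, .cons c w _ => (IrrPath.compose c).comp w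

end

/-!
The action is diagonal in the basis of paths, each path `w` being scaled by `χ_w(g)`, so a vector
is invariant exactly when it is supported on invariant paths. Characters are multiplicative along
concatenation, so if `p.comp q` and `q` are invariant then so is `p`. Hence every invariant path of
positive length ends in an irreducible invariant path (split repeatedly, keeping the right factor)
whose complement is a shorter invariant path; this gives existence of the factorization. For
uniqueness, if two factorizations of the same path end in irreducible paths, the shorter one is a
suffix of the longer with an invariant complement, which irreducibility forces to be trivial.
-/

namespace Quiver.Path

variable {V : Type*} [Quiver V]

theorem exists_eq_comp_of_comp_eq_comp_of_length_le :
    ∀ {x y z₁ z₂ : V} {p₁ : Path x z₁} {q₁ : Path z₁ y} {p₂ : Path x z₂} {q₂ : Path z₂ y},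
      p₁.comp q₁ = p₂.comp q₂ → q₁.length ≤ q₂.length →
      ∃ u : Path z₂ z₁, p₁ = p₂.comp u ∧ q₂ = u.comp q₁
  | _, _, _, _, _, .nil, _, q₂, h, _ => ⟨q₂, h, (comp_nil q₂).symm⟩
  | _, _, _, _, _, .cons _ _, _, .nil, _, hle => by simp at hle
  | _, _, _, _, p₁, .cons q₁ e₁, p₂, .cons q₂ e₂, h, hle => by
      simp only [comp_cons, cons.injEq] at h
      obtain ⟨rfl, hq, he⟩ := h
      obtain ⟨u, rfl, rfl⟩ :=
        exists_eq_comp_of_comp_eq_comp_of_length_le (eq_of_heq hq) (by simpa using hle)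
      exact ⟨u, rfl, by rw [eq_of_heq he, comp_cons]⟩

end Quiver.Path

section

variable {k G V : Type} [Field k] [Group G] [Quiver.{1} V] {χ : ∀ x y : V, (x ⟶ y) → (G →* kˣ)}

theorem pathChar_eq_weight {x y : V} (w : Path x y) (g : G) :
    pathChar χ w g = w.weight fun e => χ _ _ e g := by
  induction w with
  | nil => simp [pathChar]
  | cons p e ih => simp [pathChar, ih]

theorem pathChar_comp {x y z : V} (p : Path x y) (q : Path y z) (g : G) :
    pathChar χ (p.comp q) g = pathChar χ p g * pathChar χ q g := by
  simp only [pathChar_eq_weight, Path.weight_comp]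

namespace IsInvPath

theorem comp {x y z : V} {p : Path x y} {q : Path y z} (hp : IsInvPath χ p)
    (hq : IsInvPath χ q) : IsInvPath χ (p.comp q) := fun g => by
  rw [pathChar_comp, hp g, hq g, one_mul]

theorem of_comp_left {x y z : V} {p : Path x y} {q : Path y z} (h : IsInvPath χ (p.comp q))
    (hq : IsInvPath χ q) : IsInvPath χ p := fun g => by
  simpa [pathChar_comp, hq g] using h g

theorem exists_eq_comp_isIrrInvPath {x y : V} {w : Path x y} (hw : IsInvPath χ w)
    (hpos : 0 < w.length) :
    ∃ (z : V) (u : Path x z) (v : Path z y), IsIrrInvPath χ v ∧ w = u.comp v := by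
  by_cases hsplit : ∃ (z : V) (w₁ : Path x z) (w₂ : Path z y), 0 < w₁.length ∧
      0 < w₂.length ∧ IsInvPath χ w₁ ∧ IsInvPath χ w₂ ∧ w = w₁.comp w₂
  · obtain ⟨z, w₁, w₂, hpos₁, hpos₂, -, hw₂, hw₁₂⟩ := hsplit
    obtain ⟨z', u, v, hv, rfl⟩ := hw₂.exists_eq_comp_isIrrInvPath hpos₂
    exact ⟨z', w₁.comp u, v, hv, hw₁₂.trans (Path.comp_assoc _ _ _).symm⟩
  · exact ⟨x, .nil, w, ⟨hw, hpos, hsplit⟩, (Path.nil_comp w).symm⟩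
termination_by w.length
decreasing_by rw [hw₁₂, Path.length_comp]; omega

end IsInvPath

theorem IsIrrInvPath.eq_of_comp_eq_comp {x y z₁ z₂ : V} {p₁ : Path x z₁} {w₁ : Path z₁ y}
    {p₂ : Path x z₂} {w₂ : Path z₂ y} (h₁ : IsIrrInvPath χ w₁) (h₂ : IsIrrInvPath χ w₂)
    (h : p₁.comp w₁ = p₂.comp w₂) : z₁ = z₂ ∧ p₁ ≍ p₂ ∧ w₁ ≍ w₂ := by
  wlog hle : w₁.length ≤ w₂.length generalizing z₁ z₂ p₁ p₂ w₁ w₂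
  · obtain ⟨hz, hp, hw⟩ := this h₂ h₁ h.symm (by omega)
    exact ⟨hz.symm, hp.symm, hw.symm⟩
  obtain ⟨u, rfl, rfl⟩ := Path.exists_eq_comp_of_comp_eq_comp_of_length_le h hle
  have hu : u.length = 0 := by
    by_contra hu
    exact h₂.2.2 ⟨_, u, w₁, Nat.pos_of_ne_zero hu, h₁.2.1, h₂.1.of_comp_left h₁.1, h₁.1, rfl⟩
  obtain rfl := Path.eq_of_length_zero u hu
  obtain rfl := Path.eq_nil_of_length_zero u hu
  simp

namespace IrrPath

@[simp]
theorem compose_nil (x : V) : (nil x : IrrPath χ x x).compose = .nil := by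
  simp [compose]

@[simp]
theorem compose_cons {x y z : V} (c : IrrPath χ x y) (w : Path y z) (hw : IsIrrInvPath χ w) :
    (cons c w hw).compose = c.compose.comp w := by
  simp [compose]

theorem isInvPath_compose {x y : V} (c : IrrPath χ x y) : IsInvPath χ c.compose := by
  induction c with
  | nil => exact fun _ => by simp [pathChar]
  | cons c w hw ih => simpa using ih.comp hw.1

theorem exists_compose_eq {x y : V} (w : Path x y) (hw : IsInvPath χ w) :
    ∃ c : IrrPath χ x y, c.compose = w := by
  rcases Nat.eq_zero_or_pos w.length with hlen | hpos
  · obtain rfl := Path.eq_of_length_zero w hlen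
    exact ⟨nil x, by simp [Path.eq_nil_of_length_zero w hlen]⟩
  · obtain ⟨z, u, v, hv, huv⟩ := hw.exists_eq_comp_isIrrInvPath hpos
    obtain ⟨c, rfl⟩ := exists_compose_eq u ((huv ▸ hw).of_comp_left hv.1)
    exact ⟨cons c v hv, by simp [huv]⟩
termination_by w.length
decreasing_by rw [huv, Path.length_comp]; have := hv.2.1; omega

theorem compose_injective {x y : V} : Function.Injective (compose : IrrPath χ x y → Path x y) := by
  intro c₁ c₂ h
  induction c₁ with
  | nil =>
    cases c₂ with
    | nil => rfl
    | cons c₂ w₂ h₂ =>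
      exact absurd (Path.nil_of_comp_eq_nil_right (by simpa using h.symm)) h₂.2.1.ne'
  | cons c₁ w₁ h₁ ih =>
    cases c₂ with
    | nil => exact absurd (Path.nil_of_comp_eq_nil_right (by simpa using h)) h₁.2.1.ne'
    | cons c₂ w₂ h₂ =>
      simp only [compose_cons] at h
      obtain ⟨rfl, hc, hw⟩ := h₁.eq_of_comp_eq_comp h₂ h
      obtain rfl := eq_of_heq hw
      obtain rfl := ih (eq_of_heq hc)
      rfl

end IrrPath

theorem actG_apply (x y : V) (g : G) (f : Path x y →₀ k) (w : Path x y) :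
    actG χ x y g f w = pathChar χ w g * f w := by
  induction f using Finsupp.induction_linear with
  | zero => simp
  | add f₁ f₂ h₁ h₂ => simp [h₁, h₂, mul_add]
  | single v a => by_cases h : v = w <;> simp [actG, h]

theorem invSpace_eq_supported (x y : V) :
    InvSpace χ x y = Finsupp.supported k k {w : Path x y | IsInvPath χ w} := by
  ext f
  simp only [InvSpace, Submodule.mem_iInf, LinearMap.mem_eqLocus, LinearMap.id_apply,
    Finsupp.ext_iff, actG_apply, Finsupp.mem_supported, Set.subset_def, Finset.mem_coe,
    Finsupp.mem_support_iff, Set.mem_ofPred_eq, IsInvPath, mul_left_eq_self₀, Units.val_eq_one]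
  exact ⟨fun h w hw g => (h g w).resolve_right hw, fun h g w => or_iff_not_imp_right.2 (h w · g)⟩

theorem isInvPath_iff_existsUnique_compose {x y : V} (w : Path x y) :
    IsInvPath χ w ↔ ∃! c : IrrPath χ x y, c.compose = w := by
  refine ⟨fun hw => ?_, fun ⟨c, hc, _⟩ => hc ▸ c.isInvPath_compose⟩
  obtain ⟨c, hc⟩ := IrrPath.exists_compose_eq w hw
  exact ⟨c, hc, fun c' hc' => IrrPath.compose_injective (hc'.trans hc.symm)⟩

end

/-- The invariant subcategory of a Schurian-generated free `k`-category under a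
homogeneous action of a finite group is free over the irreducible invariant paths:
invariants are spanned by invariant paths, and each invariant path is the composite
of a unique sequence of irreducible invariant paths. -/
theorem invariants_of_schurian_generated_free_category_are_free
    {k G V : Type} [Field k] [Group G] [Finite G] [Quiver.{1} V]
    [∀ x y : V, Subsingleton (x ⟶ y)]
    (χ : ∀ x y : V, (x ⟶ y) → (G →* kˣ)) :
    (∀ x y : V, InvSpace (k := k) χ x y =
        Submodule.span k {f : Path x y →₀ k |
          ∃ w : Path x y, IsInvPath χ w ∧ f = Finsupp.single w 1}) ∧
    (∀ (x y : V) (w : Path x y),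
        IsInvPath χ w ↔ ∃! c : IrrPath χ x y, c.compose = w) := by
  refine ⟨fun x y => ?_, fun x y => isInvPath_iff_existsUnique_compose⟩
  rw [invSpace_eq_supported, Finsupp.supported_eq_span_single]
  congr 1
  ext f
  simp [eq_comm]
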